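/- arXiv:1807.00147 — 8 statements merged into one kernel-verified Lean document; each statement's English description precedes it below -/
import Mathlib

section
/- Lemma 1 (vector form): the function v ↦ E(0, v) attains its minimum over the cube [0, ε]^m at the unique point v* given componentwise by v* j = 0 if l j > λ j; v* j = 1 − (l j)/(λ j) if (λ j)·(1 − ε) ≤ l j ≤ λ j; and v* j = ε if l j < (λ j)·(1 − ε). That is, E(0, v*) ≤ E(0, v) for all v ∈ [0, ε]^m, with equality only at v = v*. -/
open Finset

/-- Objective `E(u, v) = Σ_j max(u, v j) · l j − γ·u + (1/2)·Σ_j λ j · ((v j)² − 2·(v j))`. -/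
noncomputable def Eobj (m : ℕ) (l lam : Fin m → ℝ) (γ : ℝ) (u : ℝ) (v : Fin m → ℝ) : ℝ :=
  (∑ j, max u (v j) * l j) - γ * u + (1 / 2) * ∑ j, lam j * ((v j) ^ 2 - 2 * v j)

/-
For `v ≥ 0` each coordinate of `E(0, v)` is the parabola `λ/2 · (t - s)² - λ/2 · s²` with vertex
`s = 1 - l/λ`, and the piecewise formula for `v*` is exactly the clamp of `s` to `[0, ε]`. Clamping
is the projection onto an interval, so `(t - s)² ≥ (c - s)² + (t - c)²` for `t ∈ [0, ε]` and
`c = clamp s`; summing gives `E(0, v) ≥ E(0, v*) + Σ λ_j/2 · (v_j - v*_j)²`, which yields both the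
minimality and the uniqueness of `v*`.
-/

theorem sq_clamp_sub_add_sq_sub_clamp_le {lo hi s t : ℝ} (hlo : lo ≤ t) (hhi : t ≤ hi) :
    (max lo (min hi s) - s) ^ 2 + (t - max lo (min hi s)) ^ 2 ≤ (t - s) ^ 2 := by
  rcases le_total s lo with hs | hs
  · rw [max_eq_left (min_le_of_right_le hs)]
    nlinarith
  rcases le_total s hi with hs' | hs'
  · rw [min_eq_right hs', max_eq_right hs]
    nlinarith
  · rw [min_eq_left hs', max_eq_right (hlo.trans hhi)]
    nlinarith

theorem ite_eq_max_min {L Λ ε : ℝ} (hΛ : 0 < Λ) (hε : 0 ≤ ε) :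
    (if Λ < L then 0 else if L < Λ * (1 - ε) then ε else 1 - L / Λ) =
      max 0 (min ε (1 - L / Λ)) := by
  split_ifs with h₁ h₂
  · have hneg : 1 - L / Λ < 0 := by rwa [sub_neg, one_lt_div hΛ]
    exact (max_eq_left ((min_le_right _ _).trans hneg.le)).symm
  · have hgt : ε < 1 - L / Λ := by rw [lt_sub_comm, div_lt_iff₀ hΛ]; linarith
    rw [min_eq_left hgt.le, max_eq_right hε]
  · push Not at h₁ h₂
    have hnonneg : 0 ≤ 1 - L / Λ := sub_nonneg.2 ((div_le_one hΛ).2 h₁)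
    have hle : 1 - L / Λ ≤ ε := by rw [sub_le_comm, le_div_iff₀ hΛ]; linarith
    rw [min_eq_right hle, max_eq_right hnonneg]

theorem Eobj_zero_eq {m : ℕ} (l lam : Fin m → ℝ) (γ : ℝ) {v : Fin m → ℝ} (hv : ∀ j, 0 ≤ v j)
    (hlam : ∀ j, lam j ≠ 0) :
    Eobj m l lam γ 0 v =
      ∑ j, lam j / 2 * ((v j - (1 - l j / lam j)) ^ 2 - (1 - l j / lam j) ^ 2) := by
  simp only [Eobj, max_eq_right (hv _), mul_zero, sub_zero, mul_sum, ← sum_add_distrib]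
  refine sum_congr rfl fun j _ => ?_
  field_simp [hlam j]
  ring

theorem Eobj_zero_max_min_add_sum_sq_le {m : ℕ} (l lam : Fin m → ℝ) (γ : ℝ) {ε : ℝ}
    (hlam : ∀ j, 0 < lam j) {v : Fin m → ℝ} (hv : ∀ j, 0 ≤ v j ∧ v j ≤ ε) :
    Eobj m l lam γ 0 (fun j => max 0 (min ε (1 - l j / lam j))) +
        ∑ j, lam j / 2 * (v j - max 0 (min ε (1 - l j / lam j))) ^ 2 ≤
      Eobj m l lam γ 0 v := by
  have hlam_ne j := (hlam j).ne'
  rw [Eobj_zero_eq l lam γ (fun j => le_max_left _ _) hlam_ne,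
    Eobj_zero_eq l lam γ (fun j => (hv j).1) hlam_ne, ← sum_add_distrib]
  refine sum_le_sum fun j _ => ?_
  linear_combination
    mul_le_mul_of_nonneg_left
      (sq_clamp_sub_add_sq_sub_clamp_le (s := 1 - l j / lam j) (hv j).1 (hv j).2)
      (half_pos (hlam j)).le

theorem lemma1_vector_minimizer_general (m : ℕ)
    (l : Fin m → ℝ)
    (lam : Fin m → ℝ) (hlam : ∀ j, 0 < lam j)
    (γ : ℝ) (ε : ℝ) (hε0 : 0 < ε) :
    let vstar : Fin m → ℝ := fun j =>
      if lam j < l j then 0 else if l j < lam j * (1 - ε) then ε else 1 - l j / lam j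
    (∀ j, 0 ≤ vstar j ∧ vstar j ≤ ε) ∧
      ∀ v : Fin m → ℝ, (∀ j, 0 ≤ v j ∧ v j ≤ ε) →
        Eobj m l lam γ 0 vstar ≤ Eobj m l lam γ 0 v ∧
          (Eobj m l lam γ 0 v = Eobj m l lam γ 0 vstar → v = vstar) := by
  intro vstar
  have hvstar : vstar = fun j => max 0 (min ε (1 - l j / lam j)) :=
    funext fun j => ite_eq_max_min (hlam j) hε0.le
  rw [hvstar]
  refine ⟨fun j => ⟨le_max_left _ _, max_le hε0.le (min_le_left _ _)⟩, fun v hv => ?_⟩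
  have hgrowth := Eobj_zero_max_min_add_sum_sq_le l lam γ hlam hv
  have hterm_nonneg j (_ : j ∈ univ) :
      0 ≤ lam j / 2 * (v j - max 0 (min ε (1 - l j / lam j))) ^ 2 := by
    have := hlam j
    positivity
  have hsum_nonneg := sum_nonneg hterm_nonneg
  refine ⟨by linarith, fun heq => funext fun j => ?_⟩
  have hterm_zero := (sum_eq_zero_iff_of_nonneg hterm_nonneg).1 (by linarith) j (mem_univ j)
  have hsq : (v j - max 0 (min ε (1 - l j / lam j))) ^ 2 = 0 :=
    (mul_eq_zero.1 hterm_zero).resolve_left (half_pos (hlam j)).ne'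
  exact sub_eq_zero.1 (pow_eq_zero_iff two_ne_zero |>.1 hsq)

/-- Lemma 1 (vector form): `v ↦ E(0, v)` attains its minimum over the cube `[0, ε]^m`
    at the unique point `v*` given componentwise by the piecewise formula. -/
theorem lemma1_vector_minimizer (m : ℕ) (hm : 0 < m)
    (l : Fin m → ℝ) (hl : ∀ j, 0 ≤ l j)
    (lam : Fin m → ℝ) (hlam : ∀ j, 0 < lam j)
    (γ : ℝ) (hγ : 0 < γ) (ε : ℝ) (hε0 : 0 < ε) (hε1 : ε < 1) :
    let vstar : Fin m → ℝ := fun j =>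
      if lam j < l j then 0 else if l j < lam j * (1 - ε) then ε else 1 - l j / lam j
    (∀ j, 0 ≤ vstar j ∧ vstar j ≤ ε) ∧
      ∀ v : Fin m → ℝ, (∀ j, 0 ≤ v j ∧ v j ≤ ε) →
        Eobj m l lam γ 0 vstar ≤ Eobj m l lam γ 0 v ∧
          (Eobj m l lam γ 0 v = Eobj m l lam γ 0 vstar → v = vstar) :=
  lemma1_vector_minimizer_general m l lam hlam γ ε hε0
end

section
/- Minimizer for the annotated case u = 1 (intermediate claim in the proof of Lemma 2): the function v ↦ E(1, v) attains its minimum over the cube [0, ε]^m at the unique point v* with v* j = ε for every j; that is, E(1, v*) ≤ E(1, v) for all v ∈ [0, ε]^m, with equality only when v j = ε for all j. -/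
open Finset

/-- For the annotated case `u = 1`, the function `v ↦ E(1, v)` attains its minimum
    over the cube `[0, ε]^m` at the unique point with all coordinates equal to `ε`. -/
theorem annotated_case_minimizer (m : ℕ) (hm : 0 < m)
    (l : Fin m → ℝ) (hl : ∀ j, 0 ≤ l j)
    (lam : Fin m → ℝ) (hlam : ∀ j, 0 < lam j)
    (γ : ℝ) (hγ : 0 < γ) (ε : ℝ) (hε0 : 0 < ε) (hε1 : ε < 1) :
    let vstar : Fin m → ℝ := fun _ => ε
    (∀ j, 0 ≤ vstar j ∧ vstar j ≤ ε) ∧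
      ∀ v : Fin m → ℝ, (∀ j, 0 ≤ v j ∧ v j ≤ ε) →
        Eobj m l lam γ 1 vstar ≤ Eobj m l lam γ 1 v ∧
          (Eobj m l lam γ 1 v = Eobj m l lam γ 1 vstar → v = vstar) := by
  intro vstar
  refine ⟨fun j => ⟨hε0.le, le_refl ε⟩, fun v hv => ?_⟩
  have hmax : ∀ j, max (1:ℝ) (v j) = 1 := fun j => max_eq_left ((hv j).2.trans hε1.le)
  have hmaxs : max (1:ℝ) ε = 1 := max_eq_left hε1.le
  have hE : Eobj m l lam γ 1 v =
      (∑ j, l j) - γ * 1 + (1 / 2) * ∑ j, lam j * ((v j) ^ 2 - 2 * v j) := by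
    unfold Eobj; simp [hmax]
  have hEs : Eobj m l lam γ 1 vstar =
      (∑ j, l j) - γ * 1 + (1 / 2) * ∑ j, lam j * (ε ^ 2 - 2 * ε) := by
    unfold Eobj; simp [vstar, hmaxs]
  have hterm : ∀ j, lam j * (ε ^ 2 - 2 * ε) ≤ lam j * ((v j) ^ 2 - 2 * v j) := by
    intro j
    have h1 := (hv j).1
    have h2 := (hv j).2
    have := (hlam j).le
    nlinarith [mul_nonneg (sub_nonneg.mpr h2) (by linarith : (0:ℝ) ≤ 2 - ε - v j)]
  have hsum : ∑ j, lam j * (ε ^ 2 - 2 * ε) ≤ ∑ j, lam j * ((v j) ^ 2 - 2 * v j) :=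
    Finset.sum_le_sum fun j _ => hterm j
  constructor
  · rw [hE, hEs]; linarith
  · intro heq
    by_contra hne
    have : ∃ j, v j ≠ ε := by
      by_contra h
      push_neg at h
      exact hne (funext h)
    obtain ⟨j0, hj0⟩ := this
    have hj0' : v j0 < ε := lt_of_le_of_ne (hv j0).2 hj0
    have hstrict : lam j0 * (ε ^ 2 - 2 * ε) < lam j0 * ((v j0) ^ 2 - 2 * v j0) := by
      have h1 := (hv j0).1
      have := hlam j0
      nlinarith [mul_pos (sub_pos.mpr hj0') (by linarith : (0:ℝ) < 2 - ε - v j0)]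
    have hlt : ∑ j, lam j * (ε ^ 2 - 2 * ε) < ∑ j, lam j * ((v j) ^ 2 - 2 * v j) :=
      Finset.sum_lt_sum (fun j _ => hterm j) ⟨j0, Finset.mem_univ j0, hstrict⟩
    rw [hE, hEs] at heq
    linarith
end

section
/- Lemma 2, active-learning regime (pointwise dominance): if Σ_{j} l j > γ/(1 − ε), then for every v in the cube [0, ε]^m one has E(1, v) > E(0, v); consequently, for every v ∈ [0, ε]^m, u = 1 is the unique maximizer of u ↦ E(u, v) over {0, 1}. -/
open Finset

/-- Lemma 2, active-learning regime: if `Σ_j l j > γ/(1 − ε)`, then `E(1, v) > E(0, v)`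
    for every `v` in the cube, so `u = 1` is the unique maximizer of `u ↦ E(u, v)`
    over `{0, 1}` for every such `v`. -/
theorem lemma2_active_regime (m : ℕ) (hm : 0 < m)
    (l : Fin m → ℝ) (hl : ∀ j, 0 ≤ l j)
    (lam : Fin m → ℝ) (hlam : ∀ j, 0 < lam j)
    (γ : ℝ) (hγ : 0 < γ) (ε : ℝ) (hε0 : 0 < ε) (hε1 : ε < 1)
    (hsum : γ / (1 - ε) < ∑ j, l j) :
    ∀ v : Fin m → ℝ, (∀ j, 0 ≤ v j ∧ v j ≤ ε) →
      Eobj m l lam γ 0 v < Eobj m l lam γ 1 v ∧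
        ∀ u ∈ ({0, 1} : Set ℝ),
          Eobj m l lam γ u v ≤ Eobj m l lam γ 1 v ∧
            (Eobj m l lam γ u v = Eobj m l lam γ 1 v → u = 1) := by
  intro v hv
  have h1ε : 0 < 1 - ε := by linarith
  have hγS : γ < (1 - ε) * ∑ j, l j := by
    rw [div_lt_iff₀ h1ε] at hsum; linarith
  have hexp : (1 - ε) * ∑ j, l j = (∑ j, l j) - ε * ∑ j, l j := by ring
  have hvl : ∑ j, v j * l j ≤ ε * ∑ j, l j := by
    rw [mul_sum]
    exact sum_le_sum fun j _ => mul_le_mul_of_nonneg_right (hv j).2 (hl j)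
  have e1 : ∀ j, max (1:ℝ) (v j) = 1 := fun j => max_eq_left (le_of_lt ((hv j).2.trans_lt hε1))
  have e0 : ∀ j, max (0:ℝ) (v j) = v j := fun j => max_eq_right (hv j).1
  have key : Eobj m l lam γ 0 v < Eobj m l lam γ 1 v := by
    unfold Eobj
    simp only [e1, e0, one_mul, mul_zero, mul_one, sub_zero]
    linarith
  refine ⟨key, ?_⟩
  intro u hu
  rcases hu with h | h
  · subst h
    exact ⟨le_of_lt key, fun h => absurd h (ne_of_lt key)⟩
  · rw [Set.mem_singleton_iff] at h
    subst h
    exact ⟨le_refl _, fun _ => rfl⟩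
end

section
/- Lemma 2, self-learning regime (pointwise dominance): if Σ_{j} l j < γ, then for every v in the cube [0, ε]^m one has E(0, v) > E(1, v); consequently, for every v ∈ [0, ε]^m, u = 0 is the unique maximizer of u ↦ E(u, v) over {0, 1}. -/
open Finset

/-- Lemma 2, self-learning regime: if `Σ_j l j < γ`, then `E(0, v) > E(1, v)`
    for every `v` in the cube, so `u = 0` is the unique maximizer of `u ↦ E(u, v)`
    over `{0, 1}` for every such `v`. -/
theorem lemma2_selflearning_regime (m : ℕ) (hm : 0 < m)
    (l : Fin m → ℝ) (hl : ∀ j, 0 ≤ l j)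
    (lam : Fin m → ℝ) (hlam : ∀ j, 0 < lam j)
    (γ : ℝ) (hγ : 0 < γ) (ε : ℝ) (hε0 : 0 < ε) (hε1 : ε < 1)
    (hsum : ∑ j, l j < γ) :
    ∀ v : Fin m → ℝ, (∀ j, 0 ≤ v j ∧ v j ≤ ε) →
      Eobj m l lam γ 1 v < Eobj m l lam γ 0 v ∧
        ∀ u ∈ ({0, 1} : Set ℝ),
          Eobj m l lam γ u v ≤ Eobj m l lam γ 0 v ∧
            (Eobj m l lam γ u v = Eobj m l lam γ 0 v → u = 0) := by
  intro v hv
  have hlt : Eobj m l lam γ 1 v < Eobj m l lam γ 0 v := by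
    have key : ∀ j, max (1 : ℝ) (v j) * l j ≤ max (0 : ℝ) (v j) * l j + l j := by
      intro j
      have h1 : max (1 : ℝ) (v j) = 1 := max_eq_left (le_of_lt ((hv j).2.trans_lt hε1))
      have h2 : max (0 : ℝ) (v j) = v j := max_eq_right (hv j).1
      rw [h1, h2]
      nlinarith [(hv j).1, hl j]
    have hsum2 : ∑ j, max (1 : ℝ) (v j) * l j ≤ (∑ j, max (0 : ℝ) (v j) * l j) + ∑ j, l j := by
      rw [← Finset.sum_add_distrib]
      exact Finset.sum_le_sum fun j _ => key j
    unfold Eobj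
    nlinarith
  refine ⟨hlt, fun u hu => ?_⟩
  rcases hu with rfl | rfl
  · exact ⟨le_refl _, fun _ => rfl⟩
  · exact ⟨le_of_lt hlt, fun h => absurd h (ne_of_lt hlt)⟩
end

section
/- Lemma 2 (iteration stability): let (uᵗ)_{t≥0}, (vᵗ)_{t≥1} be any alternating max–min sequence. If Σ_{j} l j > γ/(1 − ε), then u¹ = 1 and u² = 1. If Σ_{j} l j < γ, then u¹ = 0 and u² = 0. In particular, in either regime the u-iterate is constant from step 1 onwards. -/
open Finset

/-- Lemma 2 (iteration stability): along any alternating max–min sequence,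
    if `Σ_j l j > γ/(1 − ε)` then `u¹ = u² = 1` (and `uᵗ = 1` for all `t ≥ 1`),
    and if `Σ_j l j < γ` then `u¹ = u² = 0` (and `uᵗ = 0` for all `t ≥ 1`). -/
theorem lemma2_iteration_stability (m : ℕ) (hm : 0 < m)
    (l : Fin m → ℝ) (hl : ∀ j, 0 ≤ l j)
    (lam : Fin m → ℝ) (hlam : ∀ j, 0 < lam j)
    (γ : ℝ) (hγ : 0 < γ) (ε : ℝ) (hε0 : 0 < ε) (hε1 : ε < 1)
    (u : ℕ → ℝ) (v : ℕ → (Fin m → ℝ))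
    (hu : ∀ t, u t ∈ ({0, 1} : Set ℝ))
    (hvmem : ∀ t, ∀ j, 0 ≤ v (t + 1) j ∧ v (t + 1) j ≤ ε)
    (hvmin : ∀ t, ∀ w : Fin m → ℝ, (∀ j, 0 ≤ w j ∧ w j ≤ ε) →
      Eobj m l lam γ (u t) (v (t + 1)) ≤ Eobj m l lam γ (u t) w)
    (humax : ∀ t, ∀ w ∈ ({0, 1} : Set ℝ),
      Eobj m l lam γ w (v (t + 1)) ≤ Eobj m l lam γ (u (t + 1)) (v (t + 1))) :
    (γ / (1 - ε) < ∑ j, l j →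
      u 1 = 1 ∧ u 2 = 1 ∧ ∀ t, 1 ≤ t → u t = 1) ∧
    ((∑ j, l j) < γ →
      u 1 = 0 ∧ u 2 = 0 ∧ ∀ t, 1 ≤ t → u t = 0) := by
  have hεpos : (0:ℝ) < 1 - ε := by linarith
  have key : ∀ t, (γ / (1 - ε) < ∑ j, l j → u (t+1) = 1) ∧
      ((∑ j, l j) < γ → u (t+1) = 0) := by
    intro t
    have hv := hvmem t
    have hdiff : Eobj m l lam γ 1 (v (t+1)) - Eobj m l lam γ 0 (v (t+1))
        = (∑ j, (1 - v (t+1) j) * l j) - γ := by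
      simp only [Eobj]
      have h1 : ∀ j, max (1:ℝ) (v (t+1) j) = 1 := fun j =>
        max_eq_left ((hv j).2.trans hε1.le)
      have h0 : ∀ j, max (0:ℝ) (v (t+1) j) = v (t+1) j := fun j =>
        max_eq_right (hv j).1
      simp only [h1, h0]
      rw [show (∑ j, (1 - v (t+1) j) * l j)
          = (∑ j, (1:ℝ) * l j) - ∑ j, v (t+1) j * l j by
        rw [← Finset.sum_sub_distrib]; congr 1; ext j; ring]
      ring
    constructor
    · intro hS
      have hγlt : γ < (1 - ε) * ∑ j, l j := by
        rw [div_lt_iff₀ hεpos] at hS; linarith [mul_comm (∑ j, l j) (1 - ε) ▸ hS]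
      have hsum : (1 - ε) * ∑ j, l j ≤ ∑ j, (1 - v (t+1) j) * l j := by
        rw [Finset.mul_sum]
        apply Finset.sum_le_sum
        intro j _
        exact mul_le_mul_of_nonneg_right (by linarith [(hv j).2]) (hl j)
      have hlt : Eobj m l lam γ 0 (v (t+1)) < Eobj m l lam γ 1 (v (t+1)) := by
        have : 0 < Eobj m l lam γ 1 (v (t+1)) - Eobj m l lam γ 0 (v (t+1)) := by
          rw [hdiff]; linarith
        linarith
      rcases hu (t+1) with h | h
      · exfalso
        have := humax t 1 (by simp)
        rw [h] at this
        linarith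
      · exact h
    · intro hS
      have hsum : ∑ j, (1 - v (t+1) j) * l j ≤ ∑ j, l j := by
        apply Finset.sum_le_sum
        intro j _
        nlinarith [(hv j).1, hl j]
      have hlt : Eobj m l lam γ 1 (v (t+1)) < Eobj m l lam γ 0 (v (t+1)) := by
        have : Eobj m l lam γ 1 (v (t+1)) - Eobj m l lam γ 0 (v (t+1)) < 0 := by
          rw [hdiff]; linarith
        linarith
      rcases hu (t+1) with h | h
      · exact h
      · exfalso
        have := humax t 0 (by simp)
        rw [h] at this
        linarith
  constructor
  · intro hS
    refine ⟨(key 0).1 hS, (key 1).1 hS, ?_⟩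
    intro t ht
    obtain ⟨s, rfl⟩ := Nat.exists_eq_add_of_le ht
    rw [show 1 + s = s + 1 from Nat.add_comm 1 s]
    exact (key s).1 hS
  · intro hS
    refine ⟨(key 0).2 hS, (key 1).2 hS, ?_⟩
    intro t ht
    obtain ⟨s, rfl⟩ := Nat.exists_eq_add_of_le ht
    rw [show 1 + s = s + 1 from Nat.add_comm 1 s]
    exact (key s).2 hS
end

section
/- Proposition 2, case Σ_j l j > γ/(1 − ε): every alternating max–min sequence (uᵗ, vᵗ) satisfies uᵗ = 1 for all t ≥ 1 and vᵗ j = ε for all j and all t ≥ 2; i.e., the iteration converges (after finitely many steps) to the closed-form solution u* = 1 and v* j = ε for every j. -/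
open Finset

/-- Proposition 2, case `Σ_j l j > γ/(1 − ε)`: every alternating max–min sequence
    satisfies `uᵗ = 1` for all `t ≥ 1` and `vᵗ j = ε` for all `j` and all `t ≥ 2`,
    i.e. it converges to the closed-form solution `u* = 1`, `v* = ε`. -/
theorem prop2_active_case (m : ℕ) (hm : 0 < m)
    (l : Fin m → ℝ) (hl : ∀ j, 0 ≤ l j)
    (lam : Fin m → ℝ) (hlam : ∀ j, 0 < lam j)
    (γ : ℝ) (hγ : 0 < γ) (ε : ℝ) (hε0 : 0 < ε) (hε1 : ε < 1)
    (hsum : γ / (1 - ε) < ∑ j, l j)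
    (u : ℕ → ℝ) (v : ℕ → (Fin m → ℝ))
    (hu : ∀ t, u t ∈ ({0, 1} : Set ℝ))
    (hvmem : ∀ t, ∀ j, 0 ≤ v (t + 1) j ∧ v (t + 1) j ≤ ε)
    (hvmin : ∀ t, ∀ w : Fin m → ℝ, (∀ j, 0 ≤ w j ∧ w j ≤ ε) →
      Eobj m l lam γ (u t) (v (t + 1)) ≤ Eobj m l lam γ (u t) w)
    (humax : ∀ t, ∀ w ∈ ({0, 1} : Set ℝ),
      Eobj m l lam γ w (v (t + 1)) ≤ Eobj m l lam γ (u (t + 1)) (v (t + 1))) :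
    (∀ t, 1 ≤ t → u t = 1) ∧ (∀ t, 2 ≤ t → ∀ j, v t j = ε) := by
  have hε1' : (0:ℝ) < 1 - ε := by linarith
  have hγS : γ < (∑ j, l j) * (1 - ε) := (div_lt_iff₀ hε1').mp hsum
  have key1 : ∀ w : Fin m → ℝ, (∀ j, 0 ≤ w j ∧ w j ≤ ε) →
      Eobj m l lam γ 0 w < Eobj m l lam γ 1 w := by
    intro w hw
    have h1 : (∑ j, max (1:ℝ) (w j) * l j) = ∑ j, l j :=
      Finset.sum_congr rfl fun j _ => by
        rw [max_eq_left (by linarith [(hw j).2]), one_mul]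
    have h0 : (∑ j, max (0:ℝ) (w j) * l j) = ∑ j, w j * l j :=
      Finset.sum_congr rfl fun j _ => by rw [max_eq_right (hw j).1]
    have hwl : (∑ j, w j * l j) ≤ ∑ j, ε * l j :=
      Finset.sum_le_sum fun j _ => mul_le_mul_of_nonneg_right (hw j).2 (hl j)
    have hεl : (∑ j, ε * l j) = ε * ∑ j, l j := by rw [Finset.mul_sum]
    unfold Eobj
    rw [h1, h0]
    have : ε * ∑ j, l j = (∑ j, l j) * ε := mul_comm _ _
    nlinarith [hwl, hγS]
  have h1mem : (1:ℝ) ∈ ({0, 1} : Set ℝ) := by simp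
  have hu1 : ∀ t, 1 ≤ t → u t = 1 := by
    intro t ht
    obtain ⟨s, rfl⟩ : ∃ s, t = s + 1 := ⟨t - 1, by omega⟩
    have hmax := humax s 1 h1mem
    have hut := hu (s + 1)
    simp only [Set.mem_insert_iff, Set.mem_singleton_iff] at hut
    rcases hut with h0 | h1
    · exfalso
      rw [h0] at hmax
      have := key1 (v (s + 1)) (hvmem s)
      linarith
    · exact h1
  have hEeq : ∀ w : Fin m → ℝ, (∀ j, w j ≤ ε) →
      Eobj m l lam γ 1 w =
        (∑ j, l j) - γ + (1 / 2) * ∑ j, lam j * ((w j) ^ 2 - 2 * w j) := by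
    intro w hw
    have h1 : (∑ j, max (1:ℝ) (w j) * l j) = ∑ j, l j :=
      Finset.sum_congr rfl fun j _ => by
        rw [max_eq_left (by linarith [hw j]), one_mul]
    unfold Eobj
    rw [h1, mul_one]
  refine ⟨hu1, ?_⟩
  intro t ht j
  obtain ⟨s, rfl⟩ : ∃ s, t = (s + 1) + 1 := ⟨t - 2, by omega⟩
  have hus : u (s + 1) = 1 := hu1 (s + 1) (by omega)
  have hmin := hvmin (s + 1) (fun _ => ε) (fun _ => ⟨le_of_lt hε0, le_refl ε⟩)
  rw [hus, hEeq (v (s + 1 + 1)) (fun j => (hvmem (s + 1) j).2),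
      hEeq (fun _ => ε) (fun _ => le_refl ε)] at hmin
  have hsum_le : (∑ j, lam j * ((v (s + 1 + 1) j) ^ 2 - 2 * v (s + 1 + 1) j)) ≤
      ∑ j, lam j * (ε ^ 2 - 2 * ε) := by linarith
  have hpt : ∀ i ∈ Finset.univ, lam i * (ε ^ 2 - 2 * ε) ≤
      lam i * ((v (s + 1 + 1) i) ^ 2 - 2 * v (s + 1 + 1) i) := by
    intro i _
    have h0 := (hvmem (s + 1) i).1
    have h2 := (hvmem (s + 1) i).2
    have hfac : 0 ≤ (ε - v (s + 1 + 1) i) * (2 - ε - v (s + 1 + 1) i) :=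
      mul_nonneg (by linarith) (by linarith)
    nlinarith [hlam i, mul_nonneg (le_of_lt (hlam i)) hfac]
  have hseq : (∑ i, lam i * (ε ^ 2 - 2 * ε)) =
      ∑ i, lam i * ((v (s + 1 + 1) i) ^ 2 - 2 * v (s + 1 + 1) i) :=
    le_antisymm (Finset.sum_le_sum hpt) hsum_le
  have heq := (Finset.sum_eq_sum_iff_of_le hpt).mp hseq j (Finset.mem_univ j)
  have heq2 : ε ^ 2 - 2 * ε = (v (s + 1 + 1) j) ^ 2 - 2 * v (s + 1 + 1) j :=
    mul_left_cancel₀ (ne_of_gt (hlam j)) heq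
  have h0 := (hvmem (s + 1) j).1
  have h2 := (hvmem (s + 1) j).2
  have hfac : (ε - v (s + 1 + 1) j) * (2 - ε - v (s + 1 + 1) j) = 0 := by
    linear_combination -heq2
  rcases mul_eq_zero.mp hfac with h | h
  · linarith
  · linarith
end

section
/- Proposition 2, case Σ_j l j < γ: every alternating max–min sequence (uᵗ, vᵗ) satisfies uᵗ = 0 for all t ≥ 1, and for all t ≥ 2 and every j: vᵗ j = 0 if l j > λ j; vᵗ j = 1 − (l j)/(λ j) if (λ j)·(1 − ε) ≤ l j ≤ λ j; and vᵗ j = ε if l j < (λ j)·(1 − ε). I.e., the iteration converges (after finitely many steps) to the closed-form solution u* = 0 with v* given componentwise by this piecewise formula. -/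
open Finset

lemma quad_key (l lam ε x c : ℝ) (hlam : 0 < lam) (hl : 0 ≤ l) (hε0 : 0 < ε)
    (hε1 : ε < 1)
    (hx0 : 0 ≤ x) (hxε : x ≤ ε)
    (hc : c = if lam < l then 0 else if l < lam * (1 - ε) then ε else 1 - l / lam) :
    lam / 2 * (x - c) ^ 2 ≤
      (x * l + lam / 2 * (x ^ 2 - 2 * x)) - (c * l + lam / 2 * (c ^ 2 - 2 * c)) := by
  split_ifs at hc with h1 h2
  · subst hc; nlinarith
  · subst hc; nlinarith
  · push_neg at h1 h2
    have hne : lam ≠ 0 := ne_of_gt hlam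
    have hcl : lam * c = lam - l := by rw [hc]; field_simp
    apply le_of_eq
    linear_combination (c - x) * hcl

lemma Ezero (m : ℕ) (l lam : Fin m → ℝ) (γ : ℝ) (x : Fin m → ℝ) (hx : ∀ j, 0 ≤ x j) :
    Eobj m l lam γ 0 x = ∑ j, (x j * l j + lam j / 2 * ((x j) ^ 2 - 2 * x j)) := by
  unfold Eobj
  have h1 : ∑ j, max 0 (x j) * l j = ∑ j, x j * l j :=
    Finset.sum_congr rfl fun j _ => by rw [max_eq_right (hx j)]
  rw [Finset.sum_add_distrib, h1, Finset.mul_sum]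
  have h2 : ∑ j, (1 : ℝ) / 2 * (lam j * ((x j) ^ 2 - 2 * x j)) =
      ∑ j, lam j / 2 * ((x j) ^ 2 - 2 * x j) :=
    Finset.sum_congr rfl fun j _ => by ring
  rw [h2]; ring

/-- Proposition 2, case `Σ_j l j < γ`: every alternating max–min sequence satisfies
    `uᵗ = 0` for all `t ≥ 1` and, for all `t ≥ 2`, `vᵗ` equals the componentwise
    closed-form solution: `0` if `l j > λ j`, `1 − l j / λ j` if
    `λ j (1 − ε) ≤ l j ≤ λ j`, and `ε` if `l j < λ j (1 − ε)`. -/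
theorem prop2_selflearning_case (m : ℕ) (hm : 0 < m)
    (l : Fin m → ℝ) (hl : ∀ j, 0 ≤ l j)
    (lam : Fin m → ℝ) (hlam : ∀ j, 0 < lam j)
    (γ : ℝ) (hγ : 0 < γ) (ε : ℝ) (hε0 : 0 < ε) (hε1 : ε < 1)
    (hsum : (∑ j, l j) < γ)
    (u : ℕ → ℝ) (v : ℕ → (Fin m → ℝ))
    (hu : ∀ t, u t ∈ ({0, 1} : Set ℝ))
    (hvmem : ∀ t, ∀ j, 0 ≤ v (t + 1) j ∧ v (t + 1) j ≤ ε)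
    (hvmin : ∀ t, ∀ w : Fin m → ℝ, (∀ j, 0 ≤ w j ∧ w j ≤ ε) →
      Eobj m l lam γ (u t) (v (t + 1)) ≤ Eobj m l lam γ (u t) w)
    (humax : ∀ t, ∀ w ∈ ({0, 1} : Set ℝ),
      Eobj m l lam γ w (v (t + 1)) ≤ Eobj m l lam γ (u (t + 1)) (v (t + 1))) :
    (∀ t, 1 ≤ t → u t = 0) ∧
      (∀ t, 2 ≤ t → ∀ j, v t j =
        if lam j < l j then 0
        else if l j < lam j * (1 - ε) then ε
        else 1 - l j / lam j) := by
  -- E(1,x) < E(0,x) on the cube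
  have key1 : ∀ x : Fin m → ℝ, (∀ j, 0 ≤ x j ∧ x j ≤ ε) →
      Eobj m l lam γ 1 x < Eobj m l lam γ 0 x := by
    intro x hx
    unfold Eobj
    have h1 : ∑ j, max 1 (x j) * l j = ∑ j, l j :=
      Finset.sum_congr rfl fun j _ => by
        rw [max_eq_left (le_of_lt (lt_of_le_of_lt (hx j).2 hε1)), one_mul]
    have h0 : ∑ j, max 0 (x j) * l j = ∑ j, x j * l j :=
      Finset.sum_congr rfl fun j _ => by rw [max_eq_right (hx j).1]
    rw [h1, h0]
    have hxl : 0 ≤ ∑ j, x j * l j :=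
      Finset.sum_nonneg fun j _ => mul_nonneg (hx j).1 (hl j)
    linarith
  have hu0 : ∀ t, 1 ≤ t → u t = 0 := by
    intro t ht
    obtain ⟨s, rfl⟩ : ∃ s, t = s + 1 := ⟨t - 1, by omega⟩
    rcases hu (s + 1) with h | h
    · exact h
    · exfalso
      have hm0 : (0 : ℝ) ∈ ({0, 1} : Set ℝ) := Or.inl rfl
      have h2 := humax s 0 hm0
      simp only [Set.mem_singleton_iff] at h
      rw [h] at h2
      have hk := key1 (v (s + 1)) (hvmem s)
      linarith
  refine ⟨hu0, ?_⟩
  intro t ht j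
  obtain ⟨s, rfl⟩ : ∃ s, t = s + 1 + 1 := ⟨t - 2, by omega⟩
  set w : Fin m → ℝ := fun j =>
    if lam j < l j then 0
    else if l j < lam j * (1 - ε) then ε
    else 1 - l j / lam j with hwdef
  have hw : ∀ j, 0 ≤ w j ∧ w j ≤ ε := by
    intro j
    have hlj := hlam j
    simp only [hwdef]
    split_ifs with h1 h2
    · exact ⟨le_refl _, le_of_lt hε0⟩
    · exact ⟨le_of_lt hε0, le_refl _⟩
    · push_neg at h1 h2
      constructor
      · have : l j / lam j ≤ 1 := (div_le_one hlj).mpr h1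
        linarith
      · have : 1 - ε ≤ l j / lam j := (le_div_iff₀ hlj).mpr (by linarith)
        linarith
  have hu1 : u (s + 1) = 0 := hu0 (s + 1) (by omega)
  have hmin := hvmin (s + 1) w hw
  rw [hu1] at hmin
  have hvm := hvmem (s + 1)
  rw [Ezero m l lam γ (v (s + 1 + 1)) (fun j => (hvm j).1),
      Ezero m l lam γ w (fun j => (hw j).1)] at hmin
  have hsum0 : ∑ j, lam j / 2 * (v (s + 1 + 1) j - w j) ^ 2 ≤ 0 := by
    have hle : ∑ j, lam j / 2 * (v (s + 1 + 1) j - w j) ^ 2 ≤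
        ∑ j, ((v (s + 1 + 1) j * l j + lam j / 2 * ((v (s + 1 + 1) j) ^ 2 - 2 * v (s + 1 + 1) j))
          - (w j * l j + lam j / 2 * ((w j) ^ 2 - 2 * w j))) := by
      apply Finset.sum_le_sum
      intro j _
      exact quad_key (l j) (lam j) ε (v (s + 1 + 1) j) (w j) (hlam j) (hl j) hε0 hε1
        (hvm j).1 (hvm j).2 rfl
    rw [Finset.sum_sub_distrib] at hle
    linarith
  have hzero : ∀ j ∈ Finset.univ, lam j / 2 * (v (s + 1 + 1) j - w j) ^ 2 = 0 := by
    rw [← Finset.sum_eq_zero_iff_of_nonneg]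
    · have hnn : 0 ≤ ∑ j, lam j / 2 * (v (s + 1 + 1) j - w j) ^ 2 :=
        Finset.sum_nonneg fun j _ =>
          mul_nonneg (by linarith [hlam j]) (sq_nonneg _)
      linarith
    · intro j _
      exact mul_nonneg (by linarith [hlam j]) (sq_nonneg _)
  have hj := hzero j (Finset.mem_univ j)
  have hlj2 : lam j / 2 ≠ 0 := by have := hlam j; positivity
  have : (v (s + 1 + 1) j - w j) ^ 2 = 0 := by
    rcases mul_eq_zero.mp hj with h | h
    · exact absurd h hlj2
    · exact h
  have : v (s + 1 + 1) j = w j := by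
    have := pow_eq_zero_iff (n := 2) (by norm_num) |>.mp this
    linarith
  rw [this]
end

section
/- Equilibrium characterization of the closed-form solution of Proposition 2: (i) if Σ_j l j > γ/(1 − ε), then the pair (u*, v*) with u* = 1 and v* j = ε for all j is an equilibrium of the alternating scheme: v* is the unique minimizer of v ↦ E(u*, v) over [0, ε]^m and u* is the unique maximizer of u ↦ E(u, v*) over {0, 1}. (ii) If Σ_j l j < γ, then the pair (u*, v*) with u* = 0 and v* j = 0 if l j > λ j, v* j = 1 − (l j)/(λ j) if (λ j)·(1 − ε) ≤ l j ≤ λ j, and v* j = ε if l j < (λ j)·(1 − ε), is likewise an equilibrium: v* is the unique minimizer of v ↦ E(u*, v) over [0, ε]^m and u* is the unique maximizer of u ↦ E(u, v*) over {0, 1}. -/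
/-!
For `u ∈ {0, 1}` and `v ∈ [0, 1]^m` we have `max u (v j) = u + (1 - u) v j`, so `E(u, ·)` is a
constant plus a separable sum of strictly convex quadratics `t ↦ c t + (λ/2)(t² − 2t)` with
`c = (1 − u) l j`. Each is uniquely minimised on `[0, ε]` at the projection of its vertex `1 − c/λ`,
which is `ε` in case (i) and the piecewise `v*` in case (ii). For the `u`-step,
`E(1, v) − E(0, v) = Σ l − γ − Σ l j v j`, whose sign is fixed by the hypothesis of each case.
-/

open Finset

section UniqueExtremum

variable {α β : Type*}

def IsUniqueMinOn [Preorder β] (f : α → β) (s : Set α) (a : α) : Prop :=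
  ∀ x ∈ s, f a ≤ f x ∧ (f x = f a → x = a)

def IsUniqueMaxOn [Preorder β] (f : α → β) (s : Set α) (a : α) : Prop :=
  ∀ x ∈ s, f x ≤ f a ∧ (f x = f a → x = a)

theorem IsUniqueMinOn.congr [Preorder β] {f g : α → β} {s : Set α} {a : α}
    (h : IsUniqueMinOn f s a) (hfg : Set.EqOn f g s) (ha : a ∈ s) : IsUniqueMinOn g s a := by
  intro x hx
  rw [← hfg hx, ← hfg ha]
  exact h x hx

theorem IsUniqueMinOn.const_add [AddCommMonoid β] [PartialOrder β] [IsOrderedCancelAddMonoid β]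
    {f : α → β} {s : Set α} {a : α} (h : IsUniqueMinOn f s a) (c : β) :
    IsUniqueMinOn (fun x => c + f x) s a := fun x hx =>
  ⟨add_le_add le_rfl (h x hx).1, fun he => (h x hx).2 (add_left_cancel he)⟩

theorem IsUniqueMinOn.sum_pi {ι : Type*} [Fintype ι] [AddCommMonoid β] [PartialOrder β]
    [IsOrderedCancelAddMonoid β] {F : ι → α → β} {s : ι → Set α} {a : ι → α}
    (h : ∀ i, IsUniqueMinOn (F i) (s i) (a i)) :
    IsUniqueMinOn (fun x => ∑ i, F i (x i)) (Set.univ.pi s) a := by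
  intro x hx
  have hle : ∀ i ∈ univ, F i (a i) ≤ F i (x i) := fun i _ => (h i (x i) (hx i trivial)).1
  refine ⟨sum_le_sum hle, fun he => funext fun i => (h i (x i) (hx i trivial)).2 ?_⟩
  exact ((sum_eq_sum_iff_of_le hle).mp he.symm i (mem_univ i)).symm

theorem isUniqueMaxOn_pair [Preorder β] {f : α → β} {a b : α} (h : f b < f a) :
    IsUniqueMaxOn f {a, b} a := by
  rintro x (rfl | rfl)
  · exact ⟨le_rfl, fun _ => rfl⟩
  · exact ⟨h.le, fun he => absurd he h.ne⟩

end UniqueExtremum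

theorem projIcc_sub_mul_sub_nonneg {a b x t : ℝ} (hab : a ≤ b) (ht : t ∈ Set.Icc a b) :
    0 ≤ (Set.projIcc a b hab x - x) * (t - Set.projIcc a b hab x) := by
  rcases le_or_gt x a with hxa | hax
  · rw [Set.projIcc_of_le_left hab hxa]
    exact mul_nonneg (sub_nonneg.2 hxa) (sub_nonneg.2 ht.1)
  rcases le_or_gt b x with hbx | hxb
  · rw [Set.projIcc_of_right_le hab hbx]
    exact mul_nonneg_of_nonpos_of_nonpos (sub_nonpos.2 hbx) (sub_nonpos.2 ht.2)
  · rw [Set.projIcc_of_mem hab ⟨hax.le, hxb.le⟩, sub_self, zero_mul]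

-- Since `q t - q s = (a s + c - a)(t - s) + (a/2)(t - s)²` for this quadratic `q`.
theorem isUniqueMinOn_quadratic {a c s : ℝ} {S : Set ℝ} (ha : 0 < a)
    (hs : ∀ t ∈ S, 0 ≤ (a * s + c - a) * (t - s)) :
    IsUniqueMinOn (fun t => c * t + a / 2 * (t ^ 2 - 2 * t)) S s := by
  intro t ht
  have hvar := hs t ht
  have hsq : 0 ≤ a * (t - s) ^ 2 := by positivity
  refine ⟨by nlinarith, fun he => ?_⟩
  have : a * (t - s) ^ 2 = 0 := by nlinarith
  simpa [ha.ne', sub_eq_zero] using this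

theorem isUniqueMinOn_quadratic_Icc {a c ε : ℝ} (ha : 0 < a) (hε : 0 ≤ ε) :
    IsUniqueMinOn (fun t => c * t + a / 2 * (t ^ 2 - 2 * t)) (Set.Icc 0 ε)
      (Set.projIcc 0 ε hε (1 - c / a)) := by
  refine isUniqueMinOn_quadratic ha fun t ht => ?_
  have hfactor : a * Set.projIcc 0 ε hε (1 - c / a) + c - a
      = a * (Set.projIcc 0 ε hε (1 - c / a) - (1 - c / a)) := by
    field_simp
    ring
  rw [hfactor, mul_assoc]
  exact mul_nonneg ha.le (projIcc_sub_mul_sub_nonneg hε ht)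

theorem ite_eq_projIcc_one_sub_div {a c ε : ℝ} (ha : 0 < a) (hε : 0 ≤ ε) :
    (if a < c then 0 else if c < a * (1 - ε) then ε else 1 - c / a)
      = (Set.projIcc 0 ε hε (1 - c / a) : ℝ) := by
  split_ifs with hac hca
  · have : 1 - c / a ≤ 0 := by rw [sub_nonpos, one_le_div ha]; exact hac.le
    rw [Set.projIcc_of_le_left hε this]
  · have : ε ≤ 1 - c / a := by rw [le_sub_comm, div_le_iff₀ ha]; linarith
    rw [Set.projIcc_of_right_le hε this]
  · push Not at hac hca
    have h0 : 0 ≤ 1 - c / a := by rw [sub_nonneg, div_le_one ha]; exact hac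
    have hε' : 1 - c / a ≤ ε := by rw [sub_le_comm, le_div_iff₀ ha]; linarith
    rw [Set.projIcc_of_mem hε ⟨h0, hε'⟩]

section Objective

variable {m : ℕ} (l lam : Fin m → ℝ) (γ : ℝ) {u ε : ℝ} {v : Fin m → ℝ}

theorem Eobj_eq_of_mem_Icc (hu : u = 0 ∨ u = 1) (hv : ∀ j, v j ∈ Set.Icc 0 1) :
    Eobj m l lam γ u v
      = u * (∑ j, l j - γ) + ∑ j, ((1 - u) * l j * v j + lam j / 2 * (v j ^ 2 - 2 * v j)) := by
  have hmax : ∀ j, max u (v j) = u + (1 - u) * v j := by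
    rcases hu with rfl | rfl
    · simp [fun j => (hv j).1]
    · simp [fun j => (hv j).2]
  have hterm : ∀ j, (u + (1 - u) * v j) * l j = u * l j + (1 - u) * l j * v j := fun j => by ring
  have hhalf : ∀ j, 1 / 2 * (lam j * (v j ^ 2 - 2 * v j)) = lam j / 2 * (v j ^ 2 - 2 * v j) :=
    fun j => by ring
  simp only [Eobj, hmax, hterm, sum_add_distrib]
  rw [mul_sum, mul_sub, mul_sum]
  simp only [hhalf]
  ring

theorem Eobj_one_sub_Eobj_zero (hv : ∀ j, v j ∈ Set.Icc 0 1) :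
    Eobj m l lam γ 1 v - Eobj m l lam γ 0 v = ∑ j, l j - γ - ∑ j, l j * v j := by
  rw [Eobj_eq_of_mem_Icc l lam γ (.inr rfl) hv, Eobj_eq_of_mem_Icc l lam γ (.inl rfl) hv]
  simp only [sub_self, sub_zero, zero_mul, zero_add, one_mul, sum_add_distrib]
  ring

theorem isUniqueMinOn_Eobj (hlam : ∀ j, 0 < lam j) (hε0 : 0 ≤ ε) (hε1 : ε ≤ 1)
    (hu : u = 0 ∨ u = 1) :
    IsUniqueMinOn (Eobj m l lam γ u) (Set.univ.pi fun _ => Set.Icc 0 ε)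
      (fun j => Set.projIcc 0 ε hε0 (1 - (1 - u) * l j / lam j)) := by
  refine ((IsUniqueMinOn.sum_pi fun j => isUniqueMinOn_quadratic_Icc (hlam j) hε0).const_add
    (u * (∑ j, l j - γ))).congr (fun v hv => ?_) fun j _ => ?_
  · exact (Eobj_eq_of_mem_Icc l lam γ hu fun j =>
      ⟨(hv j trivial).1, (hv j trivial).2.trans hε1⟩).symm
  · exact (Set.projIcc 0 ε hε0 _).2

end Objective

theorem prop2_equilibrium_general (m : ℕ)
    (l : Fin m → ℝ) (hl : ∀ j, 0 ≤ l j)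
    (lam : Fin m → ℝ) (hlam : ∀ j, 0 < lam j)
    (γ : ℝ) (ε : ℝ) (hε0 : 0 < ε) (hε1 : ε < 1) :
    (γ / (1 - ε) < ∑ j, l j →
      let vstar : Fin m → ℝ := fun _ => ε
      (∀ j, 0 ≤ vstar j ∧ vstar j ≤ ε) ∧
        (∀ v : Fin m → ℝ, (∀ j, 0 ≤ v j ∧ v j ≤ ε) →
          Eobj m l lam γ 1 vstar ≤ Eobj m l lam γ 1 v ∧
            (Eobj m l lam γ 1 v = Eobj m l lam γ 1 vstar → v = vstar)) ∧
        (∀ u ∈ ({0, 1} : Set ℝ),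
          Eobj m l lam γ u vstar ≤ Eobj m l lam γ 1 vstar ∧
            (Eobj m l lam γ u vstar = Eobj m l lam γ 1 vstar → u = 1))) ∧
    ((∑ j, l j) < γ →
      let vstar : Fin m → ℝ := fun j =>
        if lam j < l j then 0
        else if l j < lam j * (1 - ε) then ε
        else 1 - l j / lam j
      (∀ j, 0 ≤ vstar j ∧ vstar j ≤ ε) ∧
        (∀ v : Fin m → ℝ, (∀ j, 0 ≤ v j ∧ v j ≤ ε) →
          Eobj m l lam γ 0 vstar ≤ Eobj m l lam γ 0 v ∧
            (Eobj m l lam γ 0 v = Eobj m l lam γ 0 vstar → v = vstar)) ∧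
        (∀ u ∈ ({0, 1} : Set ℝ),
          Eobj m l lam γ u vstar ≤ Eobj m l lam γ 0 vstar ∧
            (Eobj m l lam γ u vstar = Eobj m l lam γ 0 vstar → u = 0))) := by
  refine ⟨fun hsum => ?_, fun hsum => ?_⟩
  · intro vstar
    have hvstar : vstar = fun j => (Set.projIcc 0 ε hε0.le (1 - (1 - 1) * l j / lam j) : ℝ) := by
      funext j
      simp [vstar, Set.projIcc_of_right_le hε0.le hε1.le]
    have hmin := isUniqueMinOn_Eobj l lam γ hlam hε0.le hε1.le (.inr rfl)
    rw [← hvstar] at hmin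
    have hgain : Eobj m l lam γ 0 vstar < Eobj m l lam γ 1 vstar := by
      have hdiff := Eobj_one_sub_Eobj_zero l lam γ (v := vstar) fun _ => ⟨hε0.le, hε1.le⟩
      have hγ : γ < (∑ j, l j) * (1 - ε) := (div_lt_iff₀ (by linarith)).mp hsum
      rw [← sum_mul] at hdiff
      linarith
    refine ⟨fun _ => ⟨hε0.le, le_rfl⟩, fun v hv => hmin v fun j _ => hv j, ?_⟩
    exact Set.pair_comm (0 : ℝ) 1 ▸ isUniqueMaxOn_pair hgain
  · intro vstar
    have hvstar : vstar = fun j => (Set.projIcc 0 ε hε0.le (1 - (1 - 0) * l j / lam j) : ℝ) := by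
      funext j
      simpa using ite_eq_projIcc_one_sub_div (hlam j) hε0.le
    have hmin := isUniqueMinOn_Eobj l lam γ hlam hε0.le hε1.le (.inl rfl)
    rw [← hvstar] at hmin
    have hbox : ∀ j, vstar j ∈ Set.Icc 0 ε := by
      rw [hvstar]
      exact fun j => (Set.projIcc 0 ε hε0.le _).2
    have hgain : Eobj m l lam γ 1 vstar < Eobj m l lam γ 0 vstar := by
      have hdiff := Eobj_one_sub_Eobj_zero l lam γ fun j => ⟨(hbox j).1, (hbox j).2.trans hε1.le⟩
      have hpaid : 0 ≤ ∑ j, l j * vstar j := sum_nonneg fun j _ => mul_nonneg (hl j) (hbox j).1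
      linarith
    exact ⟨hbox, fun v hv => hmin v fun j _ => hv j, isUniqueMaxOn_pair hgain⟩

/-- Equilibrium characterization of the closed-form solutions of Proposition 2:
    (i) if `Σ_j l j > γ/(1 − ε)`, then `(u*, v*) = (1, (ε, …, ε))` is an equilibrium:
    `v*` is the unique minimizer of `v ↦ E(1, v)` over the cube and `1` is the unique
    maximizer of `u ↦ E(u, v*)` over `{0, 1}`;
    (ii) if `Σ_j l j < γ`, then `u* = 0` together with the piecewise `v*` is likewise
    an equilibrium. -/
theorem prop2_equilibrium (m : ℕ) (hm : 0 < m)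
    (l : Fin m → ℝ) (hl : ∀ j, 0 ≤ l j)
    (lam : Fin m → ℝ) (hlam : ∀ j, 0 < lam j)
    (γ : ℝ) (hγ : 0 < γ) (ε : ℝ) (hε0 : 0 < ε) (hε1 : ε < 1) :
    (γ / (1 - ε) < ∑ j, l j →
      let vstar : Fin m → ℝ := fun _ => ε
      (∀ j, 0 ≤ vstar j ∧ vstar j ≤ ε) ∧
        (∀ v : Fin m → ℝ, (∀ j, 0 ≤ v j ∧ v j ≤ ε) →
          Eobj m l lam γ 1 vstar ≤ Eobj m l lam γ 1 v ∧
            (Eobj m l lam γ 1 v = Eobj m l lam γ 1 vstar → v = vstar)) ∧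
        (∀ u ∈ ({0, 1} : Set ℝ),
          Eobj m l lam γ u vstar ≤ Eobj m l lam γ 1 vstar ∧
            (Eobj m l lam γ u vstar = Eobj m l lam γ 1 vstar → u = 1))) ∧
    ((∑ j, l j) < γ →
      let vstar : Fin m → ℝ := fun j =>
        if lam j < l j then 0
        else if l j < lam j * (1 - ε) then ε
        else 1 - l j / lam j
      (∀ j, 0 ≤ vstar j ∧ vstar j ≤ ε) ∧
        (∀ v : Fin m → ℝ, (∀ j, 0 ≤ v j ∧ v j ≤ ε) →
          Eobj m l lam γ 0 vstar ≤ Eobj m l lam γ 0 v ∧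
            (Eobj m l lam γ 0 v = Eobj m l lam γ 0 vstar → v = vstar)) ∧
        (∀ u ∈ ({0, 1} : Set ℝ),
          Eobj m l lam γ u vstar ≤ Eobj m l lam γ 0 vstar ∧
            (Eobj m l lam γ u vstar = Eobj m l lam γ 0 vstar → u = 0))) :=
  prop2_equilibrium_general m l hl lam hlam γ ε hε0 hε1
end
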